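/- arXiv:2206.07746 — 2 statements merged into one kernel-verified Lean document; each statement's English description precedes it below -/
import Mathlib

section
/- Under the setup of Theorem 1 with sum pooling — real graphs (A_(i), X_(i), y_i) for i = 1,…,N, synthetic graphs (A'_(i), X'_(i), y'_i) for i = 1,…,N', losses ℓ_T(W) = Σ_i ℓ(1ᵀ(A_(i))^K X_(i) W, y_i) and ℓ_S(W) = (1/N') Σ_i ℓ(1ᵀ(A'_(i))^K X'_(i) W, y'_i), L = ((C−1)/(C·N'))·√(Σ_i ‖1ᵀ(A'_(i))^K X'_(i)‖²) > 0, M > 0, T ≥ 1, η = M/(√T·L), iterates W_{t+1} = W_t − η·∇ℓ_S(W_t), a reference point W* with ‖W_t − W*‖ ≤ √2·M for all 0 ≤ t ≤ T−1, and ‖∇ℓ_S(W)‖ ≤ L for all W — assume additionally that the largest gradient gap occurs at the 0-th epoch, i.e., ‖∇ℓ_T(W_0) − ∇ℓ_S(W_0)‖ ≥ ‖∇ℓ_T(W_t) − ∇ℓ_S(W_t)‖ for all t = 0,1,…,T−1. Then min_{0≤t≤T−1} (ℓ_T(W_t) − ℓ_T(W*)) ≤ √2·M·‖∇ℓ_T(W_0)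 − ∇ℓ_S(W_0)‖ + (3M/(2√T))·((C−1)/(C·N'))·√(Σ_{i=1}^{N'} ‖1ᵀ(A'_(i))^K X'_(i)‖²). -/
open scoped BigOperators

/-- The softmax cross-entropy loss of a logit vector `z : ℝ^C` with label `y`. -/
noncomputable def crossEntropy {C : ℕ} (z : Fin C → ℝ) (y : Fin C) : ℝ :=
  Real.log (∑ c, Real.exp (z c)) - z y

/-- The logits of the `K`-layer sum-pooling SGC classifier `1ᵀ A^K X W ∈ ℝ^C`. -/
noncomputable def sgcSumLogits {n d C : ℕ} (K : ℕ)
    (A : Matrix (Fin n) (Fin n) ℝ) (X : Matrix (Fin n) (Fin d) ℝ)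
    (W : EuclideanSpace ℝ (Fin d × Fin C)) : Fin C → ℝ :=
  fun c => ∑ j, (∑ u, ∑ u', (A ^ K) u u' * X u' j) * W (j, c)

/-!
The training loss is a sum of cross-entropies of linear functions of `W`, hence convex and
differentiable, so `ℓ_T(W_t) - ℓ_T(W*) ≤ ⟪∇ℓ_T(W_t), W_t - W*⟫`. Writing
`∇ℓ_T = (∇ℓ_T - ∇ℓ_S) + ∇ℓ_S`, the first part contributes at most `√2 M` times the largest
gradient gap by Cauchy–Schwarz, while for the second the gradient steps on `ℓ_S` telescope
`‖W_t - W*‖²` exactly as in the analysis of online gradient descent. Averaging over `t < T` leaves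
`R² / (2ηT) + ηL² / 2` with `R = √2 M`, and the minimum is at most the average.
-/

open Set Real
open scoped RealInnerProductSpace

section LogSumExp

variable {ι : Type*} [Fintype ι]

lemma sum_exp_sub_log_sum_exp [Nonempty ι] (z : ι → ℝ) :
    ∑ i, exp (z i - log (∑ j, exp (z j))) = 1 := by
  have hpos : 0 < ∑ j, exp (z j) := Finset.sum_pos (fun j _ => exp_pos _) Finset.univ_nonempty
  simp_rw [exp_sub, exp_log hpos, ← Finset.sum_div, div_self hpos.ne']

lemma convexOn_log_sum_exp [Nonempty ι] :
    ConvexOn ℝ univ fun z : ι → ℝ => log (∑ i, exp (z i)) := by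
  refine ⟨convex_univ, fun z _ w _ a b ha hb hab => ?_⟩
  set S := log (∑ i, exp (z i))
  set T := log (∑ i, exp (w i))
  -- shifting by `S` and `T` normalises both sums to `1`, where convexity of `exp` applies
  have hsplit : ∀ i, exp ((a • z + b • w) i) =
      exp (a * S + b * T) * exp (a * (z i - S) + b * (w i - T)) := fun i => by
    rw [← exp_add]; simp only [Pi.add_apply, Pi.smul_apply, smul_eq_mul]; congr 1; ring
  have hconv : ∑ i, exp (a * (z i - S) + b * (w i - T)) ≤ 1 := by
    calc ∑ i, exp (a * (z i - S) + b * (w i - T))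
        ≤ ∑ i, (a * exp (z i - S) + b * exp (w i - T)) := Finset.sum_le_sum fun i _ =>
          convexOn_exp.2 (mem_univ _) (mem_univ _) ha hb hab
      _ = 1 := by
          rw [Finset.sum_add_distrib, ← Finset.mul_sum, ← Finset.mul_sum,
            sum_exp_sub_log_sum_exp, sum_exp_sub_log_sum_exp, mul_one, mul_one, hab]
  rw [log_le_iff_le_exp (Finset.sum_pos (fun i _ => exp_pos _) Finset.univ_nonempty)]
  simp only [smul_eq_mul, hsplit, ← Finset.mul_sum]
  exact mul_le_of_le_one_right (exp_pos _).le hconv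

end LogSumExp

lemma convexOn_crossEntropy {C : ℕ} (y : Fin C) :
    ConvexOn ℝ univ fun z : Fin C → ℝ => crossEntropy z y :=
  haveI : Nonempty (Fin C) := ⟨y⟩
  convexOn_log_sum_exp.sub
    ((LinearMap.proj (R := ℝ) (φ := fun _ : Fin C => ℝ) y).concaveOn convex_univ)

lemma differentiable_crossEntropy {C : ℕ} (y : Fin C) :
    Differentiable ℝ fun z : Fin C → ℝ => crossEntropy z y := by
  have : Nonempty (Fin C) := ⟨y⟩
  refine (Differentiable.log ?_ fun z => ?_).sub (differentiable_apply y)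
  · exact Differentiable.fun_sum fun c _ => (differentiable_apply c).exp
  · exact (Finset.sum_pos (fun c _ => exp_pos _) Finset.univ_nonempty).ne'

noncomputable def sgcSumLogitsLinearMap {n d C : ℕ} (K : ℕ) (A : Matrix (Fin n) (Fin n) ℝ)
    (X : Matrix (Fin n) (Fin d) ℝ) : EuclideanSpace ℝ (Fin d × Fin C) →ₗ[ℝ] (Fin C → ℝ) where
  toFun := sgcSumLogits K A X
  map_add' W V := by
    ext c; simp only [sgcSumLogits, PiLp.add_apply, mul_add, Finset.sum_add_distrib, Pi.add_apply]
  map_smul' r W := by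
    ext c; simp only [sgcSumLogits, PiLp.smul_apply, smul_eq_mul, Finset.mul_sum, Pi.smul_apply,
      RingHom.id_apply]
    exact Finset.sum_congr rfl fun j _ => by ring

lemma convexOn_crossEntropy_sgcSumLogits {n d C : ℕ} (K : ℕ) (A : Matrix (Fin n) (Fin n) ℝ)
    (X : Matrix (Fin n) (Fin d) ℝ) (y : Fin C) :
    ConvexOn ℝ univ fun W => crossEntropy (sgcSumLogits K A X W) y :=
  (convexOn_crossEntropy y).comp_linearMap (sgcSumLogitsLinearMap K A X)

lemma differentiable_crossEntropy_sgcSumLogits {n d C : ℕ} (K : ℕ)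
    (A : Matrix (Fin n) (Fin n) ℝ) (X : Matrix (Fin n) (Fin d) ℝ) (y : Fin C) :
    Differentiable ℝ fun W => crossEntropy (sgcSumLogits K A X W) y :=
  (differentiable_crossEntropy y).comp
    (LinearMap.toContinuousLinearMap (sgcSumLogitsLinearMap K A X)).differentiable

lemma convexOn_sum {ι E : Type*} [AddCommMonoid E] [Module ℝ E] {s : Set E} (hs : Convex ℝ s)
    (t : Finset ι) {f : ι → E → ℝ} (hf : ∀ i ∈ t, ConvexOn ℝ s (f i)) :
    ConvexOn ℝ s fun x => ∑ i ∈ t, f i x := by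
  classical
  induction t using Finset.induction_on with
  | empty => simpa using convexOn_const 0 hs
  | insert i t hi ih =>
    simp only [Finset.sum_insert hi]
    exact (hf i (t.mem_insert_self i)).add (ih fun j hj => hf j (Finset.mem_insert_of_mem hj))

lemma sum_range_succ_sub_eq_of_succ_eq {a b : ℕ → ℝ} {T : ℕ} (hab : ∀ t < T, a (t + 1) = b t) :
    ∑ t ∈ Finset.range (T + 1), (a t - b t) = a 0 - b T := by
  induction T with
  | zero => simp
  | succ T ih =>
    rw [Finset.sum_range_succ, ih fun t ht => hab t (by omega), hab T (by omega)]
    ring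

section GradientDescent

variable {E : Type*} [NormedAddCommGroup E] [InnerProductSpace ℝ E] [CompleteSpace E]

lemma ConvexOn.sub_le_inner_gradient {f : E → ℝ} (hf : ConvexOn ℝ univ f) {x : E}
    (hx : DifferentiableAt ℝ f x) (v : E) : f x - f v ≤ ⟪gradient f x, x - v⟫ := by
  have hline : ConvexOn ℝ univ (f ∘ AffineMap.lineMap (k := ℝ) x v) := by
    simpa using hf.comp_affineMap (AffineMap.lineMap x v)
  have hderiv : HasDerivAt (f ∘ AffineMap.lineMap (k := ℝ) x v) (fderiv ℝ f x (v - x)) 0 := by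
    refine HasFDerivAt.comp_hasDerivAt (0 : ℝ) ?_ AffineMap.hasDerivAt_lineMap
    simpa using hx.hasFDerivAt
  have hslope := hline.le_slope_of_hasDerivAt (mem_univ 0) (mem_univ 1) one_pos hderiv
  have hinner : ⟪gradient f x, x - v⟫ = -fderiv ℝ f x (v - x) := by
    rw [inner_gradient_left, ← map_neg, neg_sub]
  rw [slope_def_field, Function.comp_apply, Function.comp_apply, AffineMap.lineMap_apply_one,
    AffineMap.lineMap_apply_zero, sub_zero, div_one] at hslope
  linarith

lemma ConvexOn.sub_le_of_gradient_step {f : E → ℝ} (hf : ConvexOn ℝ univ f) {x : E}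
    (hx : DifferentiableAt ℝ f x) (w g : E) {η : ℝ} (hη : η ≠ 0) :
    f x - f w ≤ ‖x - w‖ * ‖gradient f x - g‖ +
      (‖x - w‖ ^ 2 - ‖x - η • g - w‖ ^ 2) / (2 * η) + η / 2 * ‖g‖ ^ 2 := by
  have hstep : ‖x - η • g - w‖ ^ 2 = ‖x - w‖ ^ 2 - 2 * η * ⟪g, x - w⟫ + η ^ 2 * ‖g‖ ^ 2 := by
    rw [sub_right_comm, norm_sub_sq_real, real_inner_smul_right, norm_smul, mul_pow,
      Real.norm_eq_abs, sq_abs, real_inner_comm]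
    ring
  have hinner : ⟪g, x - w⟫ = (‖x - w‖ ^ 2 - ‖x - η • g - w‖ ^ 2) / (2 * η) + η / 2 * ‖g‖ ^ 2 := by
    rw [hstep]; field_simp; ring
  calc f x - f w ≤ ⟪gradient f x - g, x - w⟫ + ⟪g, x - w⟫ := by
        rw [← inner_add_left, sub_add_cancel]; exact hf.sub_le_inner_gradient hx w
    _ ≤ _ := by
        rw [hinner, add_assoc]; gcongr
        exact (real_inner_le_norm _ _).trans_eq (mul_comm _ _)

theorem ConvexOn.exists_lt_sub_le_of_inexact_gradient_descent {f : E → ℝ}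
    (hf : ConvexOn ℝ univ f) (hdf : Differentiable ℝ f) {T : ℕ} (hT : 1 ≤ T) {η L δ R : ℝ}
    (hη : 0 < η) {w g : ℕ → E} (hstep : ∀ t, t + 2 ≤ T → w (t + 1) = w t - η • g t) (w' : E)
    (hR : ∀ t < T, ‖w t - w'‖ ≤ R) (hg : ∀ t < T, ‖g t‖ ≤ L)
    (hδ : ∀ t < T, ‖gradient f (w t) - g t‖ ≤ δ) :
    ∃ t < T, f (w t) - f w' ≤ R * δ + R ^ 2 / (2 * η * T) + η / 2 * L ^ 2 := by
  obtain ⟨T, rfl⟩ : ∃ T', T = T' + 1 := ⟨T - 1, by omega⟩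
  set dist2 : ℕ → ℝ := fun t => ‖w t - w'‖ ^ 2
  set next2 : ℕ → ℝ := fun t => ‖w t - η • g t - w'‖ ^ 2
  have hbound : ∀ t < T + 1, f (w t) - f w' ≤ R * δ + (dist2 t - next2 t) / (2 * η) +
      η / 2 * L ^ 2 := fun t ht => by
    refine (hf.sub_le_of_gradient_step (hdf _) w' (g t) hη.ne').trans ?_
    gcongr
    exacts [(norm_nonneg _).trans (hR t ht), hR t ht, hδ t ht, hg t ht]
  have htelescope : ∑ t ∈ Finset.range (T + 1), (dist2 t - next2 t) ≤ R ^ 2 := by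
    rw [sum_range_succ_sub_eq_of_succ_eq fun t ht => by
      simp only [dist2, next2, hstep t (by omega)]]
    have hdist0 : dist2 0 ≤ R ^ 2 := pow_le_pow_left₀ (norm_nonneg _) (hR 0 (by omega)) 2
    have hnext : 0 ≤ next2 T := by positivity
    linarith
  obtain ⟨t, ht, hle⟩ := Finset.exists_le_of_sum_le Finset.nonempty_range_add_one <| calc
    ∑ t ∈ Finset.range (T + 1), (f (w t) - f w')
      ≤ ∑ t ∈ Finset.range (T + 1), (R * δ + (dist2 t - next2 t) / (2 * η) + η / 2 * L ^ 2) :=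
        Finset.sum_le_sum fun t ht => hbound t (Finset.mem_range.1 ht)
    _ = (T + 1) * (R * δ + η / 2 * L ^ 2) +
        (∑ t ∈ Finset.range (T + 1), (dist2 t - next2 t)) / (2 * η) := by
        rw [Finset.sum_add_distrib, Finset.sum_add_distrib, ← Finset.sum_div]
        simp only [Finset.sum_const, Finset.card_range, nsmul_eq_mul]; push_cast; ring
    _ ≤ (T + 1) * (R * δ + η / 2 * L ^ 2) + R ^ 2 / (2 * η) := by gcongr
    _ = ∑ t ∈ Finset.range (T + 1), (R * δ + R ^ 2 / (2 * η * ↑(T + 1)) + η / 2 * L ^ 2) := by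
        simp only [Finset.sum_const, Finset.card_range, nsmul_eq_mul]; push_cast; field_simp; ring
  exact ⟨t, Finset.mem_range.1 ht, hle⟩

end GradientDescent

theorem one_step_matching_proposition_sum_pooling_general
    (C d K N N' : ℕ)
    (m : Fin N → ℕ)
    (A : ∀ i : Fin N, Matrix (Fin (m i)) (Fin (m i)) ℝ)
    (X : ∀ i : Fin N, Matrix (Fin (m i)) (Fin d) ℝ)
    (y : Fin N → Fin C)
    (n : Fin N' → ℕ)
    (A' : ∀ i : Fin N', Matrix (Fin (n i)) (Fin (n i)) ℝ)
    (X' : ∀ i : Fin N', Matrix (Fin (n i)) (Fin d) ℝ)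
    (lossT lossS : EuclideanSpace ℝ (Fin d × Fin C) → ℝ)
    (hlossT : lossT = fun W => ∑ i, crossEntropy (sgcSumLogits K (A i) (X i) W) (y i))
    (L : ℝ)
    (hL : L = (((C : ℝ) - 1) / ((C : ℝ) * (N' : ℝ))) *
      Real.sqrt (∑ i, ∑ j, (∑ u, ∑ u', ((A' i) ^ K) u u' * X' i u' j) ^ 2))
    (hLpos : 0 < L)
    (M : ℝ) (hM : 0 < M) (T : ℕ) (hT : 1 ≤ T)
    (η : ℝ) (hη : η = M / (Real.sqrt T * L))
    (W : ℕ → EuclideanSpace ℝ (Fin d × Fin C))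
    (hstep : ∀ t, t + 2 ≤ T → W (t + 1) = W t - η • gradient lossS (W t))
    (Wstar : EuclideanSpace ℝ (Fin d × Fin C))
    (hbdd : ∀ t < T, ‖W t - Wstar‖ ≤ Real.sqrt 2 * M)
    (hgrad : ∀ V : EuclideanSpace ℝ (Fin d × Fin C), ‖gradient lossS V‖ ≤ L)
    (hmax : ∀ t < T, ‖gradient lossT (W t) - gradient lossS (W t)‖ ≤
      ‖gradient lossT (W 0) - gradient lossS (W 0)‖) :
    ∃ t < T, lossT (W t) - lossT Wstar ≤
      Real.sqrt 2 * M * ‖gradient lossT (W 0) - gradient lossS (W 0)‖ +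
        (3 * M / (2 * Real.sqrt T)) * (((C : ℝ) - 1) / ((C : ℝ) * (N' : ℝ))) *
          Real.sqrt (∑ i, ∑ j, (∑ u, ∑ u', ((A' i) ^ K) u u' * X' i u' j) ^ 2) := by
  have hconvex : ConvexOn ℝ univ lossT := hlossT ▸ convexOn_sum convex_univ _ fun i _ =>
    convexOn_crossEntropy_sgcSumLogits K (A i) (X i) (y i)
  have hdiff : Differentiable ℝ lossT := hlossT ▸ Differentiable.fun_sum fun i _ =>
    differentiable_crossEntropy_sgcSumLogits K (A i) (X i) (y i)
  have hsqrtT : 0 < Real.sqrt T := Real.sqrt_pos.2 (by exact_mod_cast hT)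
  obtain ⟨t, ht, hle⟩ := hconvex.exists_lt_sub_le_of_inexact_gradient_descent hdiff hT
    (by rw [hη]; positivity) hstep Wstar hbdd (fun t _ => hgrad (W t)) hmax
  refine ⟨t, ht, hle.trans_eq ?_⟩
  -- with `η = M / (√T L)` the step-size terms `2M² / (2ηT)` and `ηL² / 2` add up to `3ML / (2√T)`
  rw [mul_assoc _ _ (Real.sqrt _), ← hL, hη, mul_pow, Real.sq_sqrt zero_le_two,
    ← Real.sq_sqrt (Nat.cast_nonneg T), Real.sqrt_sq hsqrtT.le]
  field_simp
  ring

/-- Proposition 1 of the paper (sum-pooling case): if the gradient gap is largest at the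
0-th epoch, the one-step matching loss bounds the minimal suboptimality. -/
theorem one_step_matching_proposition_sum_pooling
    (C d K N N' : ℕ) (hC : 1 ≤ C) (hd : 1 ≤ d) (hK : 1 ≤ K) (hN' : 1 ≤ N')
    (m : Fin N → ℕ)
    (A : ∀ i : Fin N, Matrix (Fin (m i)) (Fin (m i)) ℝ)
    (X : ∀ i : Fin N, Matrix (Fin (m i)) (Fin d) ℝ)
    (y : Fin N → Fin C)
    (n : Fin N' → ℕ)
    (A' : ∀ i : Fin N', Matrix (Fin (n i)) (Fin (n i)) ℝ)
    (X' : ∀ i : Fin N', Matrix (Fin (n i)) (Fin d) ℝ)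
    (y' : Fin N' → Fin C)
    (lossT lossS : EuclideanSpace ℝ (Fin d × Fin C) → ℝ)
    (hlossT : lossT = fun W => ∑ i, crossEntropy (sgcSumLogits K (A i) (X i) W) (y i))
    (hlossS : lossS = fun W =>
      (1 / (N' : ℝ)) * ∑ i, crossEntropy (sgcSumLogits K (A' i) (X' i) W) (y' i))
    (L : ℝ)
    (hL : L = (((C : ℝ) - 1) / ((C : ℝ) * (N' : ℝ))) *
      Real.sqrt (∑ i, ∑ j, (∑ u, ∑ u', ((A' i) ^ K) u u' * X' i u' j) ^ 2))
    (hLpos : 0 < L)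
    (M : ℝ) (hM : 0 < M) (T : ℕ) (hT : 1 ≤ T)
    (η : ℝ) (hη : η = M / (Real.sqrt T * L))
    (W : ℕ → EuclideanSpace ℝ (Fin d × Fin C))
    (hstep : ∀ t, t + 2 ≤ T → W (t + 1) = W t - η • gradient lossS (W t))
    (Wstar : EuclideanSpace ℝ (Fin d × Fin C))
    (hbdd : ∀ t < T, ‖W t - Wstar‖ ≤ Real.sqrt 2 * M)
    (hgrad : ∀ V : EuclideanSpace ℝ (Fin d × Fin C), ‖gradient lossS V‖ ≤ L)
    (hmax : ∀ t < T, ‖gradient lossT (W t) - gradient lossS (W t)‖ ≤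
      ‖gradient lossT (W 0) - gradient lossS (W 0)‖) :
    ∃ t < T, lossT (W t) - lossT Wstar ≤
      Real.sqrt 2 * M * ‖gradient lossT (W 0) - gradient lossS (W 0)‖ +
        (3 * M / (2 * Real.sqrt T)) * (((C : ℝ) - 1) / ((C : ℝ) * (N' : ℝ))) *
          Real.sqrt (∑ i, ∑ j, (∑ u, ∑ u', ((A' i) ^ K) u u' * X' i u' j) ^ 2) :=
  one_step_matching_proposition_sum_pooling_general C d K N N' m A X y n A' X' lossT lossS hlossT L
    hL hLpos M hM T hT η hη W hstep Wstar hbdd hgrad hmax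
end

section
/- Let E be a real Hilbert space and let f, g : E → ℝ be differentiable everywhere, with f convex, and denote their gradients by ∇f and ∇g. Let θ* ∈ E, M > 0, L ≥ 0, η > 0 and an integer T ≥ 1. Let θ_0, θ_1, …, θ_{T−1} ∈ E satisfy θ_{t+1} = θ_t − η·∇g(θ_t) for 0 ≤ t ≤ T−2. Assume ‖θ_t − θ*‖ ≤ √2·M for all 0 ≤ t ≤ T−1, and ‖∇g(θ)‖ ≤ L for all θ ∈ E. Then min_{0≤t≤T−1} (f(θ_t) − f(θ*)) ≤ (√2·M/T)·Σ_{t=0}^{T−1} ‖∇f(θ_t) − ∇g(θ_t)‖ + η·L²/2 + M²/(T·η). -/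
open scoped RealInnerProductSpace
open Finset

/-!
Convexity of `f` bounds `f (θ t) - f θ*` by `⟪∇f (θ t), θ t - θ*⟫`. Splitting `∇f = (∇f - ∇g) + ∇g`,
the first part is controlled by Cauchy–Schwarz and the bound on the iterates, and the second is the
regret of gradient descent on `g`: expanding `‖θ t - η ∇g(θ t) - θ*‖²` makes the sum telescope to
at most `‖θ 0 - θ*‖² / (2η) + (η / 2) ∑ ‖∇g (θ t)‖²`. Averaging over `t < T` leaves some `t`
below the mean.
-/

theorem ConvexOn.le_sub_of_hasFDerivAt {E : Type*} [NormedAddCommGroup E] [NormedSpace ℝ E]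
    {s : Set E} {f : E → ℝ} {f' : StrongDual ℝ E} {x y : E}
    (hfc : ConvexOn ℝ s f) (hx : x ∈ s) (hy : y ∈ s) (hf : HasFDerivAt f f' x) :
    f' (y - x) ≤ f y - f x := by
  set ℓ : ℝ →ᵃ[ℝ] E := AffineMap.lineMap x y
  have hφc : ConvexOn ℝ (ℓ ⁻¹' s) (f ∘ ℓ) := hfc.comp_affineMap ℓ
  have hφd : HasDerivAt (f ∘ ℓ) (f' (y - x)) 0 :=
    hf.comp_hasDerivAt_of_eq 0 AffineMap.hasDerivAt_lineMap (by simp [ℓ])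
  simpa [ℓ, slope_def_field] using
    hφc.le_slope_of_hasDerivAt (by simpa [ℓ] using hx) (by simpa [ℓ] using hy) zero_lt_one hφd

theorem ConvexOn.sub_le_inner_gradient_s4 {E : Type*} [NormedAddCommGroup E] [InnerProductSpace ℝ E]
    [CompleteSpace E] {s : Set E} {f : E → ℝ} {x y : E}
    (hfc : ConvexOn ℝ s f) (hx : x ∈ s) (hy : y ∈ s) (hf : DifferentiableAt ℝ f x) :
    f x - f y ≤ ⟪gradient f x, x - y⟫ := by
  have := hfc.le_sub_of_hasFDerivAt hx hy hf.hasGradientAt.hasFDerivAt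
  rw [InnerProductSpace.toDual_apply_apply, ← neg_sub x y, inner_neg_right] at this
  linarith

section GradientStep

variable {E : Type*} [NormedAddCommGroup E] [InnerProductSpace ℝ E]

theorem inner_eq_of_gradient_step {η : ℝ} (hη : η ≠ 0) (x v z : E) :
    ⟪v, x - z⟫ = (‖x - z‖ ^ 2 - ‖x - η • v - z‖ ^ 2) / (2 * η) + η / 2 * ‖v‖ ^ 2 := by
  rw [sub_right_comm x, norm_sub_sq_real (x - z), real_inner_smul_right, norm_smul, real_inner_comm,
    Real.norm_eq_abs, mul_pow, sq_abs]
  field_simp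
  ring

theorem sum_inner_sub_le_of_gradient_steps {x v : ℕ → E} {η : ℝ} (hη : 0 < η) {T : ℕ}
    (hstep : ∀ t < T, x (t + 1) = x t - η • v t) (z : E) :
    ∑ t ∈ range T, ⟪v t, x t - z⟫ ≤
      ‖x 0 - z‖ ^ 2 / (2 * η) + η / 2 * ∑ t ∈ range T, ‖v t‖ ^ 2 := by
  have hsum : ∑ t ∈ range T, ⟪v t, x t - z⟫ =
      (‖x 0 - z‖ ^ 2 - ‖x T - z‖ ^ 2) / (2 * η) + η / 2 * ∑ t ∈ range T, ‖v t‖ ^ 2 := by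
    rw [mul_sum, ← sum_range_sub' (fun t ↦ ‖x t - z‖ ^ 2), sum_div, ← sum_add_distrib]
    refine sum_congr rfl fun t ht ↦ ?_
    rw [hstep t (mem_range.1 ht), inner_eq_of_gradient_step hη.ne']
  rw [hsum]
  gcongr
  linarith [sq_nonneg ‖x T - z‖]

theorem sum_inner_sub_le_of_gradient_steps' {x v : ℕ → E} {η : ℝ} (hη : 0 < η) {T : ℕ}
    (hstep : ∀ t, t + 1 < T → x (t + 1) = x t - η • v t) (z : E) :
    ∑ t ∈ range T, ⟪v t, x t - z⟫ ≤
      ‖x 0 - z‖ ^ 2 / (2 * η) + η / 2 * ∑ t ∈ range T, ‖v t‖ ^ 2 := by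
  rcases Nat.eq_zero_or_pos T with rfl | hT
  · simp only [range_zero, sum_empty, mul_zero, add_zero]
    positivity
  set x' := Function.update x T (x (T - 1) - η • v (T - 1))
  have hx' : ∀ t < T, x' t = x t := fun t ht ↦ Function.update_of_ne ht.ne _ _
  have hstep' : ∀ t < T, x' (t + 1) = x' t - η • v t := by
    intro t ht
    rcases (Nat.succ_le_of_lt ht).lt_or_eq with hlt | rfl
    · rw [hx' _ hlt, hx' t ht, hstep t hlt]
    · simp [x']
  calc ∑ t ∈ range T, ⟪v t, x t - z⟫ = ∑ t ∈ range T, ⟪v t, x' t - z⟫ :=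
        sum_congr rfl fun t ht ↦ by rw [hx' t (mem_range.1 ht)]
    _ ≤ ‖x' 0 - z‖ ^ 2 / (2 * η) + η / 2 * ∑ t ∈ range T, ‖v t‖ ^ 2 :=
        sum_inner_sub_le_of_gradient_steps hη hstep' z
    _ = ‖x 0 - z‖ ^ 2 / (2 * η) + η / 2 * ∑ t ∈ range T, ‖v t‖ ^ 2 := by rw [hx' 0 hT]

theorem ConvexOn.sum_sub_le_of_gradient_steps [CompleteSpace E] {f g : E → ℝ}
    (hconv : ConvexOn ℝ Set.univ f) (hf : Differentiable ℝ f) {x : ℕ → E} {η : ℝ} (hη : 0 < η)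
    {T : ℕ} (hstep : ∀ t, t + 1 < T → x (t + 1) = x t - η • gradient g (x t)) (z : E) :
    ∑ t ∈ range T, (f (x t) - f z) ≤
      ∑ t ∈ range T, ‖gradient f (x t) - gradient g (x t)‖ * ‖x t - z‖ +
        (‖x 0 - z‖ ^ 2 / (2 * η) + η / 2 * ∑ t ∈ range T, ‖gradient g (x t)‖ ^ 2) := calc
  _ ≤ ∑ t ∈ range T, ⟪gradient f (x t), x t - z⟫ :=
      sum_le_sum fun t _ ↦ hconv.sub_le_inner_gradient_s4 trivial trivial (hf _)
  _ = ∑ t ∈ range T, ⟪gradient f (x t) - gradient g (x t), x t - z⟫ +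
        ∑ t ∈ range T, ⟪gradient g (x t), x t - z⟫ := by
      simp only [← sum_add_distrib, inner_sub_left, sub_add_cancel]
  _ ≤ _ := add_le_add (sum_le_sum fun t _ ↦ real_inner_le_norm _ _)
      (sum_inner_sub_le_of_gradient_steps' hη hstep z)

end GradientStep

theorem one_step_matching_core_estimate_general
    {E : Type*} [NormedAddCommGroup E] [InnerProductSpace ℝ E] [CompleteSpace E]
    (f g : E → ℝ) (hf : Differentiable ℝ f)
    (hconv : ConvexOn ℝ Set.univ f)
    (θstar : E) (M L η : ℝ) (hη : 0 < η)
    (T : ℕ) (hT : 1 ≤ T)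
    (θ : ℕ → E) (hstep : ∀ t, t + 2 ≤ T → θ (t + 1) = θ t - η • gradient g (θ t))
    (hbdd : ∀ t < T, ‖θ t - θstar‖ ≤ Real.sqrt 2 * M)
    (hgrad : ∀ x : E, ‖gradient g x‖ ≤ L) :
    ∃ t < T, f (θ t) - f θstar ≤
      (Real.sqrt 2 * M / T) *
          ∑ t ∈ Finset.range T, ‖gradient f (θ t) - gradient g (θ t)‖ +
        η * L ^ 2 / 2 + M ^ 2 / (T * η) := by
  set S := ∑ t ∈ range T, ‖gradient f (θ t) - gradient g (θ t)‖
  have hT' : (0 : ℝ) < T := by exact_mod_cast hT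
  have hsum : ∑ t ∈ range T, (f (θ t) - f θstar) ≤
      ∑ _t ∈ range T, (Real.sqrt 2 * M / T * S + η * L ^ 2 / 2 + M ^ 2 / (T * η)) := calc
    _ ≤ ∑ t ∈ range T, ‖gradient f (θ t) - gradient g (θ t)‖ * ‖θ t - θstar‖ +
          (‖θ 0 - θstar‖ ^ 2 / (2 * η) + η / 2 * ∑ t ∈ range T, ‖gradient g (θ t)‖ ^ 2) :=
        hconv.sum_sub_le_of_gradient_steps hf hη hstep θstar
    _ ≤ ∑ t ∈ range T, ‖gradient f (θ t) - gradient g (θ t)‖ * (Real.sqrt 2 * M) +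
          ((Real.sqrt 2 * M) ^ 2 / (2 * η) + η / 2 * ∑ _t ∈ range T, L ^ 2) := by
        gcongr with t ht
        · exact hbdd t (mem_range.1 ht)
        · exact hbdd 0 hT
        · exact hgrad _
    _ = ∑ _t ∈ range T, (Real.sqrt 2 * M / T * S + η * L ^ 2 / 2 + M ^ 2 / (T * η)) := by
        simp only [← sum_mul, sum_const, card_range, nsmul_eq_mul, mul_pow,
          Real.sq_sqrt zero_le_two]
        field_simp
        ring
  obtain ⟨t, ht, hle⟩ := exists_le_of_sum_le (nonempty_range_iff.2 (by omega)) hsum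
  exact ⟨t, mem_range.1 ht, hle⟩

/-- Abstract core estimate in the proof of Theorem 1: gradient descent on `g`,
convexity of `f`, bounded iterates and bounded gradients of `g` yield a bound on the
minimal suboptimality of `f` along the trajectory, before choosing the learning rate. -/
theorem one_step_matching_core_estimate
    {E : Type*} [NormedAddCommGroup E] [InnerProductSpace ℝ E] [CompleteSpace E]
    (f g : E → ℝ) (hf : Differentiable ℝ f) (hg : Differentiable ℝ g)
    (hconv : ConvexOn ℝ Set.univ f)
    (θstar : E) (M L η : ℝ) (hM : 0 < M) (hL : 0 ≤ L) (hη : 0 < η)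
    (T : ℕ) (hT : 1 ≤ T)
    (θ : ℕ → E) (hstep : ∀ t, t + 2 ≤ T → θ (t + 1) = θ t - η • gradient g (θ t))
    (hbdd : ∀ t < T, ‖θ t - θstar‖ ≤ Real.sqrt 2 * M)
    (hgrad : ∀ x : E, ‖gradient g x‖ ≤ L) :
    ∃ t < T, f (θ t) - f θstar ≤
      (Real.sqrt 2 * M / T) *
          ∑ t ∈ Finset.range T, ‖gradient f (θ t) - gradient g (θ t)‖ +
        η * L ^ 2 / 2 + M ^ 2 / (T * η) :=
  one_step_matching_core_estimate_general f g hf hconv θstar M L η hη T hT θ hstep hbdd hgrad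
end
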